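/- arXiv:1209.2026 — 3 statements merged into one kernel-verified Lean document; each statement's English description precedes it below -/
import Mathlib

section
/- In the polynomial ring k[x] over a field k, let I = ⟨x² + x³⟩, let ξ = -1 (so that the initial form in_<ξ(f) is the sum of terms of lowest degree), and Δ = {0, 1} (corresponding to monomials 1, x). Then: (a) for every monomial x^m with m ∉ Δ, the ideal in_m(I) of coefficients of initial terms equal to x^m is ⟨1⟩, and for m ∈ Δ it is 0 (i.e., I is Δ-monic); but (b) k[x]/I is not a free k-module of rank 2 = #Δ. -/
/-!
Since `x² + x³ = (x + 1) x²`, every nonzero element of `I` has lowest-degree term of degree at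
least 2, while `(x + 1) xʲ ∈ I` has initial term `xʲ` for each `j ≥ 2`. Nevertheless
`k[x]/I` has dimension `deg (x² + x³) = 3`: with lowest-degree initial forms, the monomials
of `Δ` do not span the quotient.
-/

open Polynomial

/-- For `ξ = -1` the initial form of `f` is its lowest-degree term, so this is `in_{x^j}(I)`. -/
def initialCoeffIdeal {R : Type*} [Semiring R] (I : Ideal R[X]) (j : ℕ) : Ideal R :=
  Ideal.span {b | ∃ f ∈ I, f ≠ 0 ∧ f.natTrailingDegree = j ∧ f.coeff j = b}

namespace Polynomial

variable {R : Type*}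

theorem natTrailingDegree_le_of_dvd [Semiring R] [NoZeroDivisors R] {p q : R[X]} (h : p ∣ q)
    (hq : q ≠ 0) : p.natTrailingDegree ≤ q.natTrailingDegree := by
  obtain ⟨r, rfl⟩ := h
  rw [natTrailingDegree_mul (left_ne_zero_of_mul hq) (right_ne_zero_of_mul hq)]
  exact Nat.le_add_right _ _

theorem X_add_one_mul_X_pow_ne_zero [Semiring R] [Nontrivial R] (n : ℕ) :
    ((X + 1) * X ^ n : R[X]) ≠ 0 :=
  fun h => by simpa using X_add_C_ne_zero (1 : R) (mul_X_pow_eq_zero h)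

theorem natTrailingDegree_X_add_one_mul_X_pow [Semiring R] [Nontrivial R] (n : ℕ) :
    ((X + 1) * X ^ n : R[X]).natTrailingDegree = n := by
  rw [natTrailingDegree_mul_X_pow (by simpa using X_add_C_ne_zero (1 : R)) n,
    natTrailingDegree_eq_zero.mpr (Or.inr (by simp)), zero_add]

end Polynomial

theorem initialCoeffIdeal_natTrailingDegree_eq_top {K : Type*} [Field K] {I : Ideal K[X]}
    {f : K[X]} (hf : f ∈ I) (hf0 : f ≠ 0) : initialCoeffIdeal I f.natTrailingDegree = ⊤ :=
  Ideal.eq_top_of_isUnit_mem _ (Ideal.subset_span ⟨f, hf, hf0, rfl, rfl⟩)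
    (coeff_natTrailingDegree_ne_zero.mpr hf0).isUnit

theorem initialCoeffIdeal_span_singleton_eq_bot {R : Type*} [CommSemiring R] [NoZeroDivisors R]
    {p : R[X]} {j : ℕ} (hj : j < p.natTrailingDegree) :
    initialCoeffIdeal (Ideal.span {p}) j = ⊥ := by
  refine Ideal.span_eq_bot.mpr ?_
  rintro b ⟨f, hf, hf0, rfl, -⟩
  exact absurd (natTrailingDegree_le_of_dvd (Ideal.mem_span_singleton.mp hf) hf0) hj.not_ge

/-- For `I = ⟨x² + x³⟩ ⊆ k[x]`, `ξ = -1` (initial form = terms of lowest degree) and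
`Δ = {0,1}`: the ideal `I` is `Δ`-monic (for monomials `x^j` with `j ∉ Δ` the ideal of
initial coefficients is `⟨1⟩`, and for `j ∈ Δ` it is `0`), but `k[x]/I` is not a free
`k`-module of rank `2 = #Δ`. -/
theorem deltaMonic_not_free_example (k : Type*) [Field k]
    (I : Ideal (Polynomial k)) (hI : I = Ideal.span {X ^ 2 + X ^ 3})
    (inm : ℕ → Ideal k)
    (hinm : ∀ j, inm j =
      Ideal.span {b | ∃ f ∈ I, f ≠ 0 ∧ f.natTrailingDegree = j ∧ f.coeff j = b}) :
    (∀ j : ℕ, j ∉ ({0, 1} : Set ℕ) → inm j = ⊤) ∧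
    (∀ j : ℕ, j ∈ ({0, 1} : Set ℕ) → inm j = ⊥) ∧
    ¬ Nonempty (Module.Basis (Fin 2) k (Polynomial k ⧸ I)) := by
  obtain rfl : inm = initialCoeffIdeal I := funext hinm
  subst hI
  have hgen : (X ^ 2 + X ^ 3 : k[X]) = (X + 1) * X ^ 2 := by ring
  refine ⟨fun j hj => ?_, fun j hj => ?_, ?_⟩
  · have h2j : 2 ≤ j := by simp only [Set.mem_insert_iff, Set.mem_singleton_iff] at hj; omega
    have hmem : (X + 1) * X ^ j ∈ Ideal.span {(X ^ 2 + X ^ 3 : k[X])} := by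
      rw [Ideal.mem_span_singleton, hgen]
      exact mul_dvd_mul_left _ (pow_dvd_pow (X : k[X]) h2j)
    simpa only [natTrailingDegree_X_add_one_mul_X_pow] using
      initialCoeffIdeal_natTrailingDegree_eq_top hmem (X_add_one_mul_X_pow_ne_zero j)
  · apply initialCoeffIdeal_span_singleton_eq_bot
    rw [hgen, natTrailingDegree_X_add_one_mul_X_pow]
    simp only [Set.mem_insert_iff, Set.mem_singleton_iff] at hj
    omega
  · rintro ⟨b⟩
    have hdeg : (X ^ 2 + X ^ 3 : k[X]).natDegree = 3 := by compute_degree!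
    have hrank := finrank_quotient_span_eq_natDegree (f := (X ^ 2 + X ^ 3 : k[X]))
    rw [Module.finrank_eq_card_basis b, hdeg, Fintype.card_fin] at hrank
    exact absurd hrank (by decide)
end

section
/- Let B be a commutative ring, Δ a finite standard set in ℕ^d of cardinality n, and I ⊆ B[x] an ideal such that (i) the classes of monomials x^e, e ∈ Δ, form a B-basis of B[x]/I, and (ii) for every f ∈ I, the initial form in_<ξ(f) involves only monomials x^e with e ∉ Δ. For ξ ∈ ℤ^d, define I(t) := I(t,t⁻¹) ∩ B[t,x], where I(t,t⁻¹) ⊆ B[t,t⁻¹,x] is generated by the elements t·f := Σ t^{-ξ·e} c_e x^e for f = Σ c_e x^e ∈ I. Then B[t,x]/I(t) is a free B[t]-module with basis the monomials x^e, e ∈ Δ, and the fiber I(0) := image of I(t) in B[x] at t = 0 equals the monomial ideal I^Δ generated by x^e, e ∉ Δ. -/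
open MvPolynomial

/-- The torus action `t·f = Σ_e t^{-ξ·e} c_e x^e` on a polynomial `f = Σ_e c_e x^e`,
landing in `B[t,t⁻¹][x]`. -/
noncomputable def torusAct {d : ℕ} {B : Type*} [CommRing B] (ξ : Fin d → ℤ)
    (f : MvPolynomial (Fin d) B) : MvPolynomial (Fin d) (LaurentPolynomial B) :=
  ∑ e ∈ f.support,
    monomial e (LaurentPolynomial.T (-(∑ i, ξ i * (e i : ℤ))) *
      LaurentPolynomial.C (f.coeff e))

/-!
Write `w(e) = ξ·e`. For `e ∉ Δ` the basis of `B[x]/I` gives `f = x^e - Σ_{g ∈ Δ} c_g x^g ∈ I`,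
and since the initial form of `f` avoids `Δ`, `w(g) < w(e)` whenever `c_g ≠ 0`. Hence
`G_e = t^{w(e)} (t·f) = x^e - Σ t^{w(e) - w(g)} c_g x^g` lies in `I(t)` and specializes to `x^e`
at `t = 0`, and the `G_e` reduce every polynomial modulo `I(t)` to a `B[t]`-combination of the
monomials of `Δ`. Conversely, the substitution `x_i ↦ t^{ξ_i} x_i` undoes the torus action and
carries `I(t)` into `I·B[t,t⁻¹][x]`; a combination of monomials of `Δ` lying there vanishes,
because each of its `t`-coefficients lies in `I`. So these monomials form a basis modulo `I(t)`,
`I(t)` is generated by the `G_e`, and `I(0)` by the `x^e` with `e ∉ Δ`.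
-/

open scoped LaurentPolynomial Polynomial
open LaurentPolynomial (T)

namespace MvPolynomial

section RestrictSupport

variable {σ A : Type*} [CommSemiring A]

lemma coe_basisRestrictSupport_apply (s : Set (σ →₀ ℕ)) (i : s) :
    (basisRestrictSupport A s i : MvPolynomial σ A) = monomial i 1 := by
  classical
  have h : basisRestrictSupport A s i = ⟨monomial i 1, by simp⟩ := by
    refine (basisRestrictSupport A s).apply_eq_iff.2 (Finsupp.ext fun j => ?_)
    change coeff (j : σ →₀ ℕ) (monomial (i : σ →₀ ℕ) (1 : A)) = Finsupp.single i 1 j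
    simp [coeff_monomial, Finsupp.single_apply, Subtype.ext_iff]
  exact congrArg Subtype.val h

lemma mem_restrictSupport_iff_coeff {s : Set (σ →₀ ℕ)} {p : MvPolynomial σ A} :
    p ∈ restrictSupport A s ↔ ∀ e ∉ s, coeff e p = 0 := by
  rw [mem_restrictSupport_iff]
  exact ⟨fun h e he => notMem_support_iff.1 fun h' => he (h h'),
    fun h e he => by_contra fun h' => mem_support_iff.1 he (h e h')⟩

end RestrictSupport

section QuotientBasis

variable {σ A : Type*} [CommRing A]

variable (J : Ideal (MvPolynomial σ A)) (s : Set (σ →₀ ℕ))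

noncomputable def restrictSupportToQuotient : restrictSupport A s →ₗ[A] MvPolynomial σ A ⧸ J :=
  (Ideal.Quotient.mkₐ A J).toLinearMap ∘ₗ (restrictSupport A s).subtype

@[simp]
lemma restrictSupportToQuotient_apply (p : restrictSupport A s) :
    restrictSupportToQuotient J s p = Ideal.Quotient.mk J p :=
  rfl

lemma injective_restrictSupportToQuotient_iff :
    Function.Injective (restrictSupportToQuotient J s) ↔
      ∀ p ∈ restrictSupport A s, p ∈ J → p = 0 := by
  rw [← LinearMap.ker_eq_bot, LinearMap.ker_eq_bot']
  simp [Ideal.Quotient.eq_zero_iff_mem]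

lemma surjective_restrictSupportToQuotient_iff :
    Function.Surjective (restrictSupportToQuotient J s) ↔
      restrictSupport A s ⊔ J.restrictScalars A = ⊤ := by
  rw [Submodule.eq_top_iff']
  refine ⟨fun h p => ?_, fun h q => ?_⟩
  · obtain ⟨⟨r, hr⟩, hpr⟩ := h (Ideal.Quotient.mk J p)
    exact Submodule.mem_sup.2 ⟨r, hr, p - r, Ideal.Quotient.eq.1 hpr.symm, add_sub_cancel r p⟩
  · obtain ⟨p, rfl⟩ := Ideal.Quotient.mk_surjective q
    obtain ⟨r, hr, j, hj, rfl⟩ := Submodule.mem_sup.1 (h p)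
    refine ⟨⟨r, hr⟩, ?_⟩
    rw [restrictSupportToQuotient_apply, map_add, Ideal.Quotient.eq_zero_iff_mem.2 hj, add_zero]

lemma bijective_restrictSupportToQuotient_iff :
    Function.Bijective (restrictSupportToQuotient J s) ↔
      ∃ b : Module.Basis s A (MvPolynomial σ A ⧸ J),
        ∀ e : s, b e = Ideal.Quotient.mk J (monomial (e : σ →₀ ℕ) 1) := by
  constructor
  · intro h
    refine ⟨(basisRestrictSupport A s).map (LinearEquiv.ofBijective _ h), fun e => ?_⟩
    simp [coe_basisRestrictSupport_apply]
  · rintro ⟨b, hb⟩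
    have : restrictSupportToQuotient J s = ((basisRestrictSupport A s).equiv b (.refl _)).toLinearMap :=
      (basisRestrictSupport A s).ext fun e => by simp [coe_basisRestrictSupport_apply, hb]
    rw [this]
    exact LinearEquiv.bijective _

variable {J s}

lemma restrictSupport_sup_eq_top
    (hJ : ∀ e ∉ s, ∃ G ∈ J, monomial e 1 - G ∈ restrictSupport A s) :
    restrictSupport A s ⊔ J.restrictScalars A = ⊤ := by
  rw [eq_top_iff, ← (basisMonomials σ A).span_eq, Submodule.span_le]
  rintro _ ⟨e, rfl⟩
  rw [coe_basisMonomials, SetLike.mem_coe]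
  by_cases he : e ∈ s
  · exact Submodule.mem_sup_left ((monomial_mem_restrictSupport A).2 (.inl he))
  · obtain ⟨G, hG, hGs⟩ := hJ e he
    exact Submodule.mem_sup.2 ⟨_, hGs, G, hG, sub_add_cancel _ _⟩

lemma eq_of_le_of_restrictSupport {J' : Ideal (MvPolynomial σ A)} (hle : J' ≤ J)
    (hJ : ∀ p ∈ restrictSupport A s, p ∈ J → p = 0)
    (hJ' : restrictSupport A s ⊔ J'.restrictScalars A = ⊤) : J = J' := by
  refine le_antisymm (fun p hp => ?_) hle
  obtain ⟨r, hr, j, hj, rfl⟩ := Submodule.mem_sup.1 (hJ' ▸ Submodule.mem_top (x := p))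
  obtain rfl : r = 0 := hJ r hr (by simpa using J.sub_mem hp (hle hj))
  simpa using hj

end QuotientBasis

section LaurentCoefficients

variable {σ R : Type*} [CommSemiring R]

noncomputable def coeffT (n : ℤ) : MvPolynomial σ R[T;T⁻¹] →+ MvPolynomial σ R where
  toFun := AddMonoidAlgebra.map
    ((Finsupp.applyAddHom n).comp AddMonoidAlgebra.coeffAddEquiv.toAddMonoidHom)
  map_zero' := AddMonoidAlgebra.map_zero _
  map_add' := AddMonoidAlgebra.map_add _

lemma coeff_coeffT (n : ℤ) (p : MvPolynomial σ R[T;T⁻¹]) (e : σ →₀ ℕ) :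
    coeff e (coeffT n p) = (coeff e p).coeff n :=
  rfl

lemma coeffT_mul_map_C (n : ℤ) (h : MvPolynomial σ R[T;T⁻¹]) (f : MvPolynomial σ R) :
    coeffT n (h * map LaurentPolynomial.C f) = coeffT n h * f := by
  classical
  ext e
  simp only [coeff_coeffT, MvPolynomial.coeff_mul, coeff_map, AddMonoidAlgebra.coeff_sum,
    Finsupp.coe_finsetSum, Finset.sum_apply]
  exact Finset.sum_congr rfl fun x _ => AddMonoidAlgebra.coeff_mul_single_zero _ _ n

lemma coeffT_mem_of_mem_map {I : Ideal (MvPolynomial σ R)} {p : MvPolynomial σ R[T;T⁻¹]}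
    (hp : p ∈ I.map (map LaurentPolynomial.C)) (n : ℤ) : coeffT n p ∈ I := by
  obtain ⟨c, hc, rfl⟩ := Submodule.mem_span_set.1 hp
  rw [Finsupp.sum, map_sum]
  refine I.sum_mem fun q hq => ?_
  obtain ⟨f, hf, rfl⟩ := hc hq
  rw [smul_eq_mul, coeffT_mul_map_C]
  exact I.mul_mem_left _ hf

lemma eq_zero_of_mem_map_laurentC {I : Ideal (MvPolynomial σ R)} {s : Set (σ →₀ ℕ)}
    (hI : ∀ f ∈ restrictSupport R s, f ∈ I → f = 0) {p : MvPolynomial σ R[T;T⁻¹]}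
    (hps : p ∈ restrictSupport R[T;T⁻¹] s) (hp : p ∈ I.map (map LaurentPolynomial.C)) :
    p = 0 := by
  ext e n
  have hpn : coeffT n p ∈ restrictSupport R s := by
    rw [mem_restrictSupport_iff_coeff] at hps ⊢
    intro e he
    rw [coeff_coeffT, hps e he]
    rfl
  have := congrArg (coeff e) (hI _ hpn (coeffT_mem_of_mem_map hp n))
  rwa [coeff_coeffT] at this

end LaurentCoefficients

end MvPolynomial

theorem LaurentPolynomial.T_sum {R ι : Type*} [CommSemiring R] (s : Finset ι) (m : ι → ℤ) :
    (T (∑ i ∈ s, m i) : R[T;T⁻¹]) = ∏ i ∈ s, T (m i) := by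
  induction s using Finset.cons_induction with
  | empty => exact LaurentPolynomial.T_zero
  | cons a s _ ih => rw [Finset.prod_cons, Finset.sum_cons, LaurentPolynomial.T_add, ih]

namespace BialynickiBirula

section Weights

variable {σ R : Type*} [Fintype σ] [CommSemiring R]

def weight (ξ : σ → ℤ) (e : σ →₀ ℕ) : ℤ :=
  ∑ i, ξ i * (e i : ℤ)

lemma weight_lt_of_support_subset_insert {ξ : σ → ℤ} {s : Set (σ →₀ ℕ)} {f : MvPolynomial σ R}
    (hin : ∀ e ∈ f.support, (∀ g ∈ f.support, weight ξ g ≤ weight ξ e) → e ∉ s)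
    {u : σ →₀ ℕ} (hf : ↑f.support ⊆ insert u s) :
    ∀ g ∈ f.support, g ≠ u → weight ξ g < weight ξ u := by
  intro g hg hgu
  obtain ⟨m, hm, hmax⟩ := f.support.exists_max_image (weight ξ) ⟨g, hg⟩
  obtain rfl : m = u := (hf hm).resolve_right (hin m hm hmax)
  refine (hmax g hg).lt_of_ne fun h => hin g hg (fun g' hg' => h ▸ hmax g' hg') ?_
  exact (hf hg).resolve_left hgu

noncomputable def twist (ζ : σ → ℤ) :
    MvPolynomial σ R[T;T⁻¹] →ₐ[R[T;T⁻¹]] MvPolynomial σ R[T;T⁻¹] :=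
  aeval fun i => C (T (ζ i)) * X i

lemma twist_monomial (ζ : σ → ℤ) (e : σ →₀ ℕ) (a : R[T;T⁻¹]) :
    twist ζ (monomial e a) = monomial e (T (weight ζ e) * a) := by
  rw [twist, aeval_monomial, Finsupp.prod_fintype _ _ (by simp)]
  simp only [mul_pow, Finset.prod_mul_distrib, ← map_pow, ← map_prod, LaurentPolynomial.T_pow,
    weight, LaurentPolynomial.T_sum, mul_comm (e _ : ℤ)]
  rw [monomial_eq, Finsupp.prod_fintype _ _ (by simp), algebraMap_eq, C_mul]
  ring

lemma coeff_twist (ζ : σ → ℤ) (p : MvPolynomial σ R[T;T⁻¹]) (e : σ →₀ ℕ) :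
    coeff e (twist ζ p) = T (weight ζ e) * coeff e p := by
  classical
  induction p using MvPolynomial.induction_on' with
  | monomial u a =>
    rw [twist_monomial, coeff_monomial, coeff_monomial]
    split_ifs with h
    · rw [h]
    · rw [mul_zero]
  | add p q hp hq => rw [map_add, coeff_add, coeff_add, hp, hq, mul_add]

end Weights

section Homogenize

variable {σ R : Type*} [Fintype σ] [CommSemiring R]

/-- `t^m (t·f)`, which has no negative powers of `t` once `m` bounds the weights of `f`; at
`t = 0` only the terms of `f` of weight `m` survive. -/
noncomputable def homogenize (ξ : σ → ℤ) (m : ℤ) (f : MvPolynomial σ R) : MvPolynomial σ R[X] :=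
  ∑ e ∈ f.support, monomial e (Polynomial.monomial (m - weight ξ e).toNat (coeff e f))

lemma coeff_homogenize (ξ : σ → ℤ) (m : ℤ) (f : MvPolynomial σ R) (e : σ →₀ ℕ) :
    coeff e (homogenize ξ m f) = Polynomial.monomial (m - weight ξ e).toNat (coeff e f) := by
  classical
  rw [homogenize, coeff_sum]
  simp only [coeff_monomial, Finset.sum_ite_eq', mem_support_iff, ite_not]
  split_ifs with h
  · rw [h, map_zero]
  · rfl

lemma coeff_map_evalZero_homogenize (ξ : σ → ℤ) (m : ℤ) (f : MvPolynomial σ R)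
    (e : σ →₀ ℕ) :
    coeff e (map (Polynomial.evalRingHom 0) (homogenize ξ m f)) =
      if (m - weight ξ e).toNat = 0 then coeff e f else 0 := by
  rw [coeff_map, coeff_homogenize, Polynomial.coe_evalRingHom, Polynomial.eval_monomial,
    zero_pow_eq, mul_ite, mul_one, mul_zero]

end Homogenize

section Degeneration

variable {d : ℕ} {R : Type*} [CommRing R]

lemma twist_torusAct (ξ : Fin d → ℤ) (f : MvPolynomial (Fin d) R) :
    twist ξ (torusAct ξ f) = map LaurentPolynomial.C f := by
  conv_rhs => rw [f.as_sum]
  simp only [torusAct, map_sum, twist_monomial, map_monomial, ← mul_assoc]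
  refine Finset.sum_congr rfl fun e _ => ?_
  rw [weight, ← LaurentPolynomial.T_add, add_neg_cancel, LaurentPolynomial.T_zero, one_mul]

lemma map_toLaurent_homogenize {ξ : Fin d → ℤ} {m : ℤ} {f : MvPolynomial (Fin d) R}
    (hm : ∀ e ∈ f.support, weight ξ e ≤ m) :
    map Polynomial.toLaurent (homogenize ξ m f) = C (T m) * torusAct ξ f := by
  simp only [homogenize, torusAct, map_sum, map_monomial, Finset.mul_sum, C_mul_monomial,
    Polynomial.toLaurent_C_mul_T]
  refine Finset.sum_congr rfl fun e he => ?_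
  rw [Int.toNat_of_nonneg (sub_nonneg.2 (hm e he)), ← mul_assoc, ← LaurentPolynomial.T_add,
    mul_comm, weight, sub_eq_add_neg]

/-- The ideal `I(t) = I(t,t⁻¹) ∩ B[t,x]`. -/
noncomputable def degenerationIdeal (ξ : Fin d → ℤ) (I : Ideal (MvPolynomial (Fin d) R)) :
    Ideal (MvPolynomial (Fin d) R[X]) :=
  Ideal.comap (MvPolynomial.map Polynomial.toLaurent) (Ideal.span (torusAct ξ '' I))

lemma homogenize_mem_degenerationIdeal {ξ : Fin d → ℤ} {I : Ideal (MvPolynomial (Fin d) R)}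
    {f : MvPolynomial (Fin d) R} (hf : f ∈ I) {m : ℤ} (hm : ∀ e ∈ f.support, weight ξ e ≤ m) :
    homogenize ξ m f ∈ degenerationIdeal ξ I := by
  rw [degenerationIdeal, Ideal.mem_comap, map_toLaurent_homogenize hm]
  exact Ideal.mul_mem_left _ _ (Ideal.subset_span ⟨f, hf, rfl⟩)

lemma span_torusAct_le_comap_twist (ξ : Fin d → ℤ) (I : Ideal (MvPolynomial (Fin d) R)) :
    Ideal.span (torusAct ξ '' I) ≤ (I.map (map LaurentPolynomial.C)).comap (twist ξ) := by
  rw [Ideal.span_le]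
  rintro _ ⟨f, hf, rfl⟩
  rw [SetLike.mem_coe, Ideal.mem_comap, twist_torusAct]
  exact Ideal.mem_map_of_mem _ hf

lemma eq_zero_of_mem_degenerationIdeal {ξ : Fin d → ℤ} {I : Ideal (MvPolynomial (Fin d) R)}
    {s : Set (Fin d →₀ ℕ)} (hI : ∀ f ∈ restrictSupport R s, f ∈ I → f = 0)
    {p : MvPolynomial (Fin d) R[X]} (hps : p ∈ restrictSupport R[X] s)
    (hp : p ∈ degenerationIdeal ξ I) : p = 0 := by
  set q := twist ξ (map Polynomial.toLaurent p)
  have coeff_q : ∀ e, coeff e q = T (weight ξ e) * (coeff e p).toLaurent := fun e => by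
    rw [coeff_twist, coeff_map]
  have hq : q = 0 := by
    refine eq_zero_of_mem_map_laurentC hI ?_ (span_torusAct_le_comap_twist ξ I hp)
    rw [mem_restrictSupport_iff_coeff] at hps ⊢
    intro e he
    rw [coeff_q, hps e he, map_zero, mul_zero]
  refine MvPolynomial.ext _ _ fun e => ?_
  have := coeff_q e
  rwa [hq, coeff_zero, eq_comm, (LaurentPolynomial.isUnit_T _).mul_right_eq_zero,
    Polynomial.toLaurent_eq_zero, ← coeff_zero e] at this

lemma exists_degeneration_monomial {ξ : Fin d → ℤ} {I : Ideal (MvPolynomial (Fin d) R)}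
    {s : Set (Fin d →₀ ℕ)}
    (hin : ∀ f ∈ I, ∀ e ∈ f.support,
      (∀ g ∈ f.support, weight ξ g ≤ weight ξ e) → e ∉ s)
    (hI : restrictSupport R s ⊔ I.restrictScalars R = ⊤) {u : Fin d →₀ ℕ} (hu : u ∉ s) :
    ∃ G ∈ degenerationIdeal ξ I, monomial u 1 - G ∈ restrictSupport R[X] s ∧
      map (Polynomial.evalRingHom 0) G = monomial u 1 := by
  classical
  obtain ⟨r, hr, f, hfI, hrf⟩ := Submodule.mem_sup.1 (hI ▸ Submodule.mem_top (x := monomial u 1))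
  rw [mem_restrictSupport_iff_coeff] at hr
  have coeff_f : ∀ e ∉ s, coeff e f = if u = e then 1 else 0 := fun e he => by
    rw [← coeff_monomial, ← hrf, coeff_add, hr e he, zero_add]
  have hsupp : ↑f.support ⊆ insert u s := fun e he => by
    by_contra h
    rw [Set.mem_insert_iff, not_or] at h
    exact mem_support_iff.1 he (by rw [coeff_f e h.2, if_neg (Ne.symm h.1)])
  have hlt := weight_lt_of_support_subset_insert (hin f hfI) hsupp
  refine ⟨homogenize ξ (weight ξ u) f, homogenize_mem_degenerationIdeal hfI fun e he => ?_, ?_, ?_⟩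
  · rcases eq_or_ne e u with rfl | h
    · exact le_rfl
    · exact (hlt e he h).le
  · rw [mem_restrictSupport_iff_coeff]
    intro e he
    rw [coeff_sub, coeff_homogenize, coeff_f e he, coeff_monomial]
    split_ifs with h
    · rw [h, sub_self, Int.toNat_zero, Polynomial.monomial_zero_left, map_one, sub_self]
    · rw [map_zero, sub_zero]
  · refine MvPolynomial.ext _ _ fun e => ?_
    rw [coeff_map_evalZero_homogenize, coeff_monomial]
    rcases eq_or_ne e u with rfl | h
    · rw [sub_self, Int.toNat_zero, if_pos rfl, if_pos rfl, coeff_f e hu, if_pos rfl]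
    · rw [if_neg (Ne.symm h)]
      by_cases he : e ∈ f.support
      · rw [if_neg]
        have := hlt e he h
        omega
      · rw [notMem_support_iff.1 he, ite_self]

end Degeneration

end BialynickiBirula

open BialynickiBirula

theorem bb_membership_reformulation_general (d : ℕ) (B : Type*) [CommRing B]
    (ξ : Fin d → ℤ)
    (Δ : Finset (Fin d →₀ ℕ))
    (I : Ideal (MvPolynomial (Fin d) B))
    (bI : Module.Basis Δ B (MvPolynomial (Fin d) B ⧸ I))
    (hbI : ∀ e : Δ, bI e = Ideal.Quotient.mk I (monomial (e : Fin d →₀ ℕ) 1))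
    (hin : ∀ f ∈ I, ∀ e ∈ f.support,
      (∀ g ∈ f.support, (∑ i, ξ i * (g i : ℤ)) ≤ ∑ i, ξ i * (e i : ℤ)) → e ∉ Δ)
    (Itt : Ideal (MvPolynomial (Fin d) (LaurentPolynomial B)))
    (hItt : Itt = Ideal.span (torusAct ξ '' I))
    (It : Ideal (MvPolynomial (Fin d) (Polynomial B)))
    (hIt : It = Ideal.comap (MvPolynomial.map (Polynomial.toLaurent (R := B))) Itt) :
    (∃ bt : Module.Basis Δ (Polynomial B) (MvPolynomial (Fin d) (Polynomial B) ⧸ It),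
      ∀ e : Δ, bt e = Ideal.Quotient.mk It (monomial (e : Fin d →₀ ℕ) 1)) ∧
    Ideal.map (MvPolynomial.map (Polynomial.evalRingHom (0 : B))) It =
      Ideal.span {g : MvPolynomial (Fin d) B |
        ∃ e : Fin d →₀ ℕ, e ∉ Δ ∧ g = monomial e 1} := by
  obtain rfl : It = degenerationIdeal ξ I := by rw [hIt, hItt, degenerationIdeal]
  obtain ⟨hIinj, hIsurj⟩ := (bijective_restrictSupportToQuotient_iff I Δ).2 ⟨bI, hbI⟩
  rw [injective_restrictSupportToQuotient_iff] at hIinj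
  rw [surjective_restrictSupportToQuotient_iff] at hIsurj
  choose G hG hGΔ hG0 using fun e (he : e ∉ (Δ : Set (Fin d →₀ ℕ))) =>
    exists_degeneration_monomial hin hIsurj he
  set J := Ideal.span (Set.range fun e : {e // e ∉ (Δ : Set (Fin d →₀ ℕ))} => G e e.2)
  have hJ : restrictSupport B[X] Δ ⊔ J.restrictScalars B[X] = ⊤ :=
    restrictSupport_sup_eq_top fun e he => ⟨G e he, Ideal.subset_span ⟨⟨e, he⟩, rfl⟩, hGΔ e he⟩
  have hinj : ∀ p ∈ restrictSupport B[X] Δ, p ∈ degenerationIdeal ξ I → p = 0 :=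
    fun _ => eq_zero_of_mem_degenerationIdeal hIinj
  have hJeq : degenerationIdeal ξ I = J :=
    eq_of_le_of_restrictSupport (Ideal.span_le.2 (Set.range_subset_iff.2 fun e => hG e e.2))
      hinj hJ
  have hsurj : restrictSupport B[X] Δ ⊔ (degenerationIdeal ξ I).restrictScalars B[X] = ⊤ := by
    rw [hJeq]
    exact hJ
  have hbij : Function.Bijective (restrictSupportToQuotient (degenerationIdeal ξ I) Δ) :=
    ⟨(injective_restrictSupportToQuotient_iff _ _).2 hinj,
      (surjective_restrictSupportToQuotient_iff _ _).2 hsurj⟩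
  refine ⟨(bijective_restrictSupportToQuotient_iff _ _).1 hbij, ?_⟩
  rw [hJeq, Ideal.map_span, ← Set.range_comp]
  congr 1
  ext g
  simp [hG0, eq_comm]

/-- Hard direction of the reformulation of Białynicki-Birula membership: if the
monomials of `Δ` form a basis of `B[x]/I` and every initial form of an element of `I`
is supported outside `Δ`, then `B[t,x]/I(t)` is free over `B[t]` with basis the
monomials of `Δ`, and the fiber `I(0)` equals the monomial ideal `I^Δ`. -/
theorem bb_membership_reformulation (d : ℕ) (B : Type*) [CommRing B]
    [IsNoetherianRing B] (ξ : Fin d → ℤ)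
    (Δ : Finset (Fin d →₀ ℕ))
    (hstd : ∀ e ∈ Δ, ∀ g : Fin d →₀ ℕ, (∀ i, g i ≤ e i) → g ∈ Δ)
    (I : Ideal (MvPolynomial (Fin d) B))
    (bI : Module.Basis Δ B (MvPolynomial (Fin d) B ⧸ I))
    (hbI : ∀ e : Δ, bI e = Ideal.Quotient.mk I (monomial (e : Fin d →₀ ℕ) 1))
    (hin : ∀ f ∈ I, ∀ e ∈ f.support,
      (∀ g ∈ f.support, (∑ i, ξ i * (g i : ℤ)) ≤ ∑ i, ξ i * (e i : ℤ)) → e ∉ Δ)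
    (Itt : Ideal (MvPolynomial (Fin d) (LaurentPolynomial B)))
    (hItt : Itt = Ideal.span (torusAct ξ '' I))
    (It : Ideal (MvPolynomial (Fin d) (Polynomial B)))
    (hIt : It = Ideal.comap (MvPolynomial.map (Polynomial.toLaurent (R := B))) Itt) :
    (∃ bt : Module.Basis Δ (Polynomial B) (MvPolynomial (Fin d) (Polynomial B) ⧸ It),
      ∀ e : Δ, bt e = Ideal.Quotient.mk It (monomial (e : Fin d →₀ ℕ) 1)) ∧
    Ideal.map (MvPolynomial.map (Polynomial.evalRingHom (0 : B))) It =
      Ideal.span {g : MvPolynomial (Fin d) B |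
        ∃ e : Fin d →₀ ℕ, e ∉ Δ ∧ g = monomial e 1} :=
  bb_membership_reformulation_general d B ξ Δ I bI hbI hin Itt hItt It hIt
end

section
/- Let ξ ∈ ℝ^d, let <_+ and <_- be the two total orders refining <_ξ obtained as limits of <_{ξ+δ_j} and <_{ξ-δ_j} respectively for a sequence δ_j → 0 (with <_{ξ±δ_j} total orders). Then for any two exponent vectors e, f ∈ ℕ^d: (i) if f_ξ(e) ≠ f_ξ(f), then e <_+ f ⟺ e <_- f ⟺ f_ξ(e) < f_ξ(f); (ii) if f_ξ(e) = f_ξ(f) and e ≠ f, then e <_+ f ⟺ f <_- e. -/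
open Filter

/-- Let `<₊` and `<₋` be the limits of the total orders `<_{ξ+δ_j}` and `<_{ξ-δ_j}`
for a sequence `δ_j → 0`. Then for exponent vectors `e, f`: (i) if `f_ξ(e) ≠ f_ξ(f)`
then `e <₊ f ⟺ e <₋ f ⟺ f_ξ(e) < f_ξ(f)`; (ii) if `f_ξ(e) = f_ξ(f)` and `e ≠ f`,
then `e <₊ f ⟺ f <₋ e`. -/
theorem plus_minus_orders (d : ℕ) (ξ : Fin d → ℝ) (δs : ℕ → Fin d → ℝ)
    (hδ : ∀ i, Tendsto (fun j => δs j i) atTop (nhds 0))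
    (ltp ltm : (Fin d → ℕ) → (Fin d → ℕ) → Prop)
    (hltp : ∀ e f : Fin d → ℕ, ltp e f ↔ ∃ N : ℕ, ∀ j ≥ N,
      (∑ i, (e i : ℝ) * (ξ i + δs j i)) < ∑ i, (f i : ℝ) * (ξ i + δs j i))
    (hltm : ∀ e f : Fin d → ℕ, ltm e f ↔ ∃ N : ℕ, ∀ j ≥ N,
      (∑ i, (e i : ℝ) * (ξ i - δs j i)) < ∑ i, (f i : ℝ) * (ξ i - δs j i))
    (htotp : ∀ e f : Fin d → ℕ, e ≠ f → ltp e f ∨ ltp f e)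
    (htotm : ∀ e f : Fin d → ℕ, e ≠ f → ltm e f ∨ ltm f e) :
    (∀ e f : Fin d → ℕ, (∑ i, (e i : ℝ) * ξ i) ≠ (∑ i, (f i : ℝ) * ξ i) →
      ((ltp e f ↔ ltm e f) ∧
       (ltp e f ↔ (∑ i, (e i : ℝ) * ξ i) < ∑ i, (f i : ℝ) * ξ i))) ∧
    (∀ e f : Fin d → ℕ, (∑ i, (e i : ℝ) * ξ i) = (∑ i, (f i : ℝ) * ξ i) → e ≠ f →
      (ltp e f ↔ ltm f e)) := by

  -- δ-weighted sums tend to 0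
  have hsum : ∀ e : Fin d → ℕ, Tendsto (fun j => ∑ i, (e i : ℝ) * δs j i) atTop (nhds 0) := by
    intro e
    have h := tendsto_finset_sum (Finset.univ : Finset (Fin d))
      (fun i _ => ((hδ i).const_mul ((e i : ℝ))))
    simpa using h
  have hdecomp : ∀ (e : Fin d → ℕ) (j : ℕ),
      (∑ i, (e i : ℝ) * (ξ i + δs j i)) = (∑ i, (e i : ℝ) * ξ i) + ∑ i, (e i : ℝ) * δs j i := by
    intro e j
    rw [← Finset.sum_add_distrib]
    exact Finset.sum_congr rfl (fun i _ => by ring)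
  have hdecompm : ∀ (e : Fin d → ℕ) (j : ℕ),
      (∑ i, (e i : ℝ) * (ξ i - δs j i)) = (∑ i, (e i : ℝ) * ξ i) - ∑ i, (e i : ℝ) * δs j i := by
    intro e j
    rw [← Finset.sum_sub_distrib]
    exact Finset.sum_congr rfl (fun i _ => by ring)
  have htendp : ∀ e : Fin d → ℕ, Tendsto (fun j => ∑ i, (e i : ℝ) * (ξ i + δs j i)) atTop
      (nhds (∑ i, (e i : ℝ) * ξ i)) := by
    intro e
    have := (tendsto_const_nhds (x := ∑ i, (e i : ℝ) * ξ i) (f := atTop)).add (hsum e)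
    simpa [hdecomp e] using this
  have htendm : ∀ e : Fin d → ℕ, Tendsto (fun j => ∑ i, (e i : ℝ) * (ξ i - δs j i)) atTop
      (nhds (∑ i, (e i : ℝ) * ξ i)) := by
    intro e
    have := (tendsto_const_nhds (x := ∑ i, (e i : ℝ) * ξ i) (f := atTop)).sub (hsum e)
    simpa [hdecompm e] using this
  constructor
  · intro e f hne
    have key : (ltp e f ↔ (∑ i, (e i : ℝ) * ξ i) < ∑ i, (f i : ℝ) * ξ i) := by
      constructor
      · intro h
        rcases (hltp e f).1 h with ⟨N, hN⟩
        have hle : (∑ i, (e i : ℝ) * ξ i) ≤ ∑ i, (f i : ℝ) * ξ i := by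
          refine le_of_tendsto_of_tendsto (htendp e) (htendp f) ?_
          filter_upwards [eventually_ge_atTop N] with j hj
          exact (hN j hj).le
        exact lt_of_le_of_ne hle hne
      · intro h
        have hev := (htendp e).eventually_lt (htendp f) h
        rcases eventually_atTop.1 hev with ⟨N, hN⟩
        exact (hltp e f).2 ⟨N, hN⟩
    have keym : (ltm e f ↔ (∑ i, (e i : ℝ) * ξ i) < ∑ i, (f i : ℝ) * ξ i) := by
      constructor
      · intro h
        rcases (hltm e f).1 h with ⟨N, hN⟩
        have hle : (∑ i, (e i : ℝ) * ξ i) ≤ ∑ i, (f i : ℝ) * ξ i := by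
          refine le_of_tendsto_of_tendsto (htendm e) (htendm f) ?_
          filter_upwards [eventually_ge_atTop N] with j hj
          exact (hN j hj).le
        exact lt_of_le_of_ne hle hne
      · intro h
        have hev := (htendm e).eventually_lt (htendm f) h
        rcases eventually_atTop.1 hev with ⟨N, hN⟩
        exact (hltm e f).2 ⟨N, hN⟩
    exact ⟨key.trans keym.symm, key⟩
  · intro e f hEq _
    rw [hltp, hltm]
    constructor
    · rintro ⟨N, hN⟩
      refine ⟨N, fun j hj => ?_⟩
      have := hN j hj
      rw [hdecomp, hdecomp] at this
      rw [hdecompm, hdecompm]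
      linarith
    · rintro ⟨N, hN⟩
      refine ⟨N, fun j hj => ?_⟩
      have := hN j hj
      rw [hdecompm, hdecompm] at this
      rw [hdecomp, hdecomp]
      linarith
end
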